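/- arXiv:2511.08035 — 3 statements merged into one kernel-verified Lean document; each statement's English description precedes it below -/
import Mathlib

section
/- Let Φ : ℝ^p × ℝ^n → ℝ^n be differentiable, let x* : ℝ^p → ℝ^n be a differentiable map satisfying x*(θ) = Φ(θ, x*(θ)) for all θ, and let L : ℝ^n → ℝ be differentiable. Fix θ and set J := D₂Φ(θ, x*(θ)). If I − J is invertible, then the composed loss θ ↦ L(x*(θ)) is differentiable at θ with derivative D_θ (L ∘ x*)(θ) = DL(x*(θ)) ∘ (I − J)⁻¹ ∘ D₁Φ(θ, x*(θ)). -/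
open scoped Topology

/-!
Differentiating the fixed-point identity `x t = Φ (t, x t)` by the chain rule gives
`X = D₁Φ + D₂Φ ∘ X` for the derivative `X` of `x`, that is `(I - D₂Φ) ∘ X = D₁Φ`. When `I - D₂Φ`
is invertible this determines `X = (I - D₂Φ)⁻¹ ∘ D₁Φ`, and the chain rule for `L ∘ x` finishes.
-/

open ContinuousLinearMap

section FixedPoint

variable {𝕜 E F : Type*} [NontriviallyNormedField 𝕜]
  [NormedAddCommGroup E] [NormedSpace 𝕜 E] [NormedAddCommGroup F] [NormedSpace 𝕜 F]

theorem ContinuousLinearMap.eq_ring_inverse_comp_of_comp_eq {A : F →L[𝕜] F} (hA : IsUnit A)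
    {X B : E →L[𝕜] F} (h : A.comp X = B) : X = (Ring.inverse A).comp B := by
  rw [← h, ← comp_assoc, ← mul_def, Ring.inverse_mul_cancel A hA, one_def, id_comp]

theorem ContinuousLinearMap.comp_id_prod {G : Type*} [NormedAddCommGroup G] [NormedSpace 𝕜 G]
    (D : E × F →L[𝕜] G) (X : E →L[𝕜] F) :
    D.comp ((ContinuousLinearMap.id 𝕜 E).prod X) =
      D.comp (inl 𝕜 E F) + (D.comp (inr 𝕜 E F)).comp X := by
  ext v
  simp [← map_add]

variable {Φ : E × F → F} {D : E × F →L[𝕜] F} {x : E → F} {X : E →L[𝕜] F} {a : E}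

theorem HasFDerivAt.eq_add_comp_of_fixedPoint (hΦ : HasFDerivAt Φ D (a, x a))
    (hx : HasFDerivAt x X a) (hfix : ∀ᶠ t in 𝓝 a, x t = Φ (t, x t)) :
    X = D.comp (inl 𝕜 E F) + (D.comp (inr 𝕜 E F)).comp X := by
  have hΦx : HasFDerivAt x (D.comp ((ContinuousLinearMap.id 𝕜 E).prod X)) a :=
    (hΦ.comp a ((hasFDerivAt_id a).prodMk hx)).congr_of_eventuallyEq hfix
  rw [← comp_id_prod]
  exact hx.unique hΦx

theorem HasFDerivAt.hasFDerivAt_of_fixedPoint (hΦ : HasFDerivAt Φ D (a, x a))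
    (hx : HasFDerivAt x X a) (hfix : ∀ᶠ t in 𝓝 a, x t = Φ (t, x t))
    (hA : IsUnit (ContinuousLinearMap.id 𝕜 F - D.comp (inr 𝕜 E F))) :
    HasFDerivAt x
      ((Ring.inverse (ContinuousLinearMap.id 𝕜 F - D.comp (inr 𝕜 E F))).comp (D.comp (inl 𝕜 E F)))
      a := by
  refine hx.congr_fderiv (eq_ring_inverse_comp_of_comp_eq hA ?_)
  rw [sub_comp, id_comp, sub_eq_iff_eq_add, ← hΦ.eq_add_comp_of_fixedPoint hx hfix]

end FixedPoint

/-- **Gradient of the implicit differentiation method (Theorem 2).**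
If `Φ : ℝ^p × ℝ^n → ℝ^n` is differentiable, `xs : ℝ^p → ℝ^n` is differentiable
and satisfies `xs θ = Φ (θ, xs θ)` for all `θ`, and `L : ℝ^n → ℝ` is
differentiable, then at a fixed `θ` where `I - J` with `J = D₂Φ(θ, xs θ)` is
invertible, the composed loss `θ ↦ L (xs θ)` is differentiable with derivative
`DL(xs θ) ∘ (I - J)⁻¹ ∘ D₁Φ(θ, xs θ)`. -/
theorem implicit_loss_fderiv {p n : ℕ}
    (Φ : (EuclideanSpace ℝ (Fin p)) × (EuclideanSpace ℝ (Fin n)) → EuclideanSpace ℝ (Fin n))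
    (hΦ : Differentiable ℝ Φ)
    (xs : EuclideanSpace ℝ (Fin p) → EuclideanSpace ℝ (Fin n))
    (hxs : Differentiable ℝ xs)
    (hfix : ∀ θ, xs θ = Φ (θ, xs θ))
    (L : EuclideanSpace ℝ (Fin n) → ℝ)
    (hL : Differentiable ℝ L)
    (θ : EuclideanSpace ℝ (Fin p))
    (hinv : IsUnit (ContinuousLinearMap.id ℝ (EuclideanSpace ℝ (Fin n)) -
      fderiv ℝ (fun y => Φ (θ, y)) (xs θ))) :
    DifferentiableAt ℝ (fun t => L (xs t)) θ ∧
    fderiv ℝ (fun t => L (xs t)) θ =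
      (fderiv ℝ L (xs θ)).comp
        ((Ring.inverse (ContinuousLinearMap.id ℝ (EuclideanSpace ℝ (Fin n)) -
          fderiv ℝ (fun y => Φ (θ, y)) (xs θ))).comp
          (fderiv ℝ (fun t => Φ (t, xs θ)) θ)) := by
  have hD := (hΦ (θ, xs θ)).hasFDerivAt
  have hD₁ : fderiv ℝ (fun t => Φ (t, xs θ)) θ = (fderiv ℝ Φ (θ, xs θ)).comp (inl ℝ _ _) :=
    (hD.comp θ (hasFDerivAt_prodMk_left θ (xs θ))).fderiv
  have hD₂ : fderiv ℝ (fun y => Φ (θ, y)) (xs θ) = (fderiv ℝ Φ (θ, xs θ)).comp (inr ℝ _ _) :=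
    (hD.comp (xs θ) (hasFDerivAt_prodMk_right θ (xs θ))).fderiv
  rw [hD₂] at hinv ⊢
  rw [hD₁]
  have hX := hD.hasFDerivAt_of_fixedPoint (hxs θ).hasFDerivAt (.of_forall hfix) hinv
  have hLX := (hL (xs θ)).hasFDerivAt.comp θ hX
  exact ⟨hLX.differentiableAt, hLX.fderiv⟩
end

section
/- Let f : ℝ^n → ℝ be differentiable with L-Lipschitz gradient (L > 0), whose infimum f* = inf_x f(x) is attained (or finite), and which satisfies the Polyak–Łojasiewicz condition with constant μ > 0: (1/2)‖∇f(x)‖² ≥ μ (f(x) − f*) for all x. Then for every step size η with 0 < η ≤ 2/L, the gradient step x⁺ = x − η ∇f(x) satisfies f(x⁺) − f* ≤ (1 − 2μη(1 − Lη/2)) (f(x) − f*). -/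
/-!
Comparing `t ↦ f (x + t • v)` on `[0, 1]` with its quadratic majorant shows that an `L`-Lipschitz
gradient gives `f (x + v) ≤ f x + ⟪∇f x, v⟫ + L / 2 * ‖v‖ ^ 2`. For `v = -η ∇f x` this says that a
gradient step lowers `f` by at least `η (1 - L η / 2) ‖∇f x‖ ^ 2`, and the PL inequality bounds
`‖∇f x‖ ^ 2` below by `2 μ (f x - f*)`.
-/

open InnerProductSpace

section Descent

variable {E : Type*} [NormedAddCommGroup E] [InnerProductSpace ℝ E] [CompleteSpace E]
  {f : E → ℝ} {L : ℝ}

theorem hasDerivAt_comp_add_smul (hf : Differentiable ℝ f) (x v : E) (t : ℝ) :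
    HasDerivAt (fun s : ℝ => f (x + s • v)) ⟪gradient f (x + t • v), v⟫_ℝ t := by
  have hline : HasDerivAt (fun s : ℝ => x + s • v) v t := by
    simpa using ((hasDerivAt_id t).smul_const v).const_add x
  have h := (hf (x + t • v)).hasGradientAt.hasFDerivAt.comp_hasDerivAt t hline
  simp only [toDual_apply_apply] at h
  exact h

theorem inner_gradient_add_smul_le (hlip : ∀ x y, ‖gradient f x - gradient f y‖ ≤ L * ‖x - y‖)
    (x v : E) {t : ℝ} (ht : 0 ≤ t) :
    ⟪gradient f (x + t • v), v⟫_ℝ ≤ ⟪gradient f x, v⟫_ℝ + L * t * ‖v‖ ^ 2 := by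
  have hdiff : ⟪gradient f (x + t • v) - gradient f x, v⟫_ℝ ≤ L * t * ‖v‖ ^ 2 :=
    calc ⟪gradient f (x + t • v) - gradient f x, v⟫_ℝ
        ≤ ‖gradient f (x + t • v) - gradient f x‖ * ‖v‖ := real_inner_le_norm _ _
      _ ≤ L * ‖(x + t • v) - x‖ * ‖v‖ := by gcongr; exact hlip _ _
      _ = L * t * ‖v‖ ^ 2 := by
        rw [add_sub_cancel_left, norm_smul, Real.norm_of_nonneg ht]; ring
  rw [inner_sub_left] at hdiff
  linarith

theorem apply_add_le_inner_gradient_add_sq (hf : Differentiable ℝ f)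
    (hlip : ∀ x y, ‖gradient f x - gradient f y‖ ≤ L * ‖x - y‖) (x v : E) :
    f (x + v) ≤ f x + ⟪gradient f x, v⟫_ℝ + L / 2 * ‖v‖ ^ 2 := by
  set B : ℝ → ℝ := fun t => f x + t * ⟪gradient f x, v⟫_ℝ + L / 2 * t ^ 2 * ‖v‖ ^ 2
  have hB : ∀ t, HasDerivAt B (⟪gradient f x, v⟫_ℝ + L * t * ‖v‖ ^ 2) t := fun t =>
    ((((hasDerivAt_id t).mul_const _).const_add _).add
      (((hasDerivAt_pow 2 t).const_mul (L / 2)).mul_const _)).congr_deriv (by push_cast; ring)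
  have hg := hasDerivAt_comp_add_smul hf x v
  have hle := image_le_of_deriv_right_le_deriv_boundary (a := 0) (b := 1)
    (fun t _ => (hg t).continuousAt.continuousWithinAt) (fun t _ => (hg t).hasDerivWithinAt)
    (B := B) (by simp [B]) (fun t _ => (hB t).continuousAt.continuousWithinAt)
    (fun t _ => (hB t).hasDerivWithinAt)
    (fun t ht => inner_gradient_add_smul_le hlip x v ht.1) (Set.right_mem_Icc.2 zero_le_one)
  simpa [B] using hle

theorem apply_sub_smul_gradient_le (hf : Differentiable ℝ f)
    (hlip : ∀ x y, ‖gradient f x - gradient f y‖ ≤ L * ‖x - y‖) (x : E) (η : ℝ) :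
    f (x - η • gradient f x) ≤ f x - η * (1 - L * η / 2) * ‖gradient f x‖ ^ 2 := by
  have h := apply_add_le_inner_gradient_add_sq hf hlip x (-(η • gradient f x))
  rw [← sub_eq_add_neg, inner_neg_right, real_inner_smul_right, real_inner_self_eq_norm_sq,
    norm_neg, norm_smul, mul_pow, Real.norm_eq_abs, sq_abs] at h
  linarith

end Descent

theorem pl_gradient_step_contraction_general {n : ℕ}
    (f : EuclideanSpace ℝ (Fin n) → ℝ) (hf : Differentiable ℝ f)
    (L μ fstar : ℝ)
    (hlip : ∀ x y, ‖gradient f x - gradient f y‖ ≤ L * ‖x - y‖)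
    (hPL : ∀ x, μ * (f x - fstar) ≤ (1 / 2) * ‖gradient f x‖ ^ 2)
    (η : ℝ) (hη0 : 0 < η) (hη : η ≤ 2 / L) :
    ∀ x : EuclideanSpace ℝ (Fin n),
      f (x - η • gradient f x) - fstar ≤
        (1 - 2 * μ * η * (1 - L * η / 2)) * (f x - fstar) := by
  intro x
  have hL : 0 < L := (div_pos_iff_of_pos_left two_pos).1 (hη0.trans_le hη)
  have hLη : L * η ≤ 2 := by rwa [le_div_iff₀ hL, mul_comm] at hη
  have hstep : 0 ≤ η * (1 - L * η / 2) := mul_nonneg hη0.le (by linarith)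
  have hdescent := apply_sub_smul_gradient_le hf hlip x η
  linarith [mul_le_mul_of_nonneg_left (hPL x) hstep]

/-- **One-step contraction of the suboptimality gap under the PL condition.**
If `f : ℝ^n → ℝ` is differentiable with `L`-Lipschitz gradient (`L > 0`), has
finite infimum `fstar`, and satisfies the Polyak–Łojasiewicz condition
`(1/2)‖∇f(x)‖² ≥ μ (f x - fstar)` with `μ > 0`, then for every step size
`0 < η ≤ 2/L`, the gradient step `x⁺ = x - η ∇f(x)` satisfies
`f x⁺ - fstar ≤ (1 - 2μη(1 - Lη/2)) (f x - fstar)`. -/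
theorem pl_gradient_step_contraction {n : ℕ}
    (f : EuclideanSpace ℝ (Fin n) → ℝ) (hf : Differentiable ℝ f)
    (L μ fstar : ℝ) (hL : 0 < L) (hμ : 0 < μ)
    (hlip : ∀ x y, ‖gradient f x - gradient f y‖ ≤ L * ‖x - y‖)
    (hglb : IsGLB (Set.range f) fstar)
    (hPL : ∀ x, μ * (f x - fstar) ≤ (1 / 2) * ‖gradient f x‖ ^ 2)
    (η : ℝ) (hη0 : 0 < η) (hη : η ≤ 2 / L) :
    ∀ x : EuclideanSpace ℝ (Fin n),
      f (x - η • gradient f x) - fstar ≤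
        (1 - 2 * μ * η * (1 - L * η / 2)) * (f x - fstar) :=
  pl_gradient_step_contraction_general f hf L μ fstar hlip hPL η hη0 hη
end

section
/- Let (B_k)_{k≥0} be a sequence of continuous linear maps on ℝ^n converging in operator norm to a continuous linear map J with operator norm ‖J‖ < 1, and let (c_k)_{k≥0} be a sequence in ℝ^n converging to c ∈ ℝ^n. For K ≥ 1 define S_K = Σ_{i=1}^{K} (B_{K-1} ∘ B_{K-2} ∘ ⋯ ∘ B_i)(c_{i-1}), where the composition is the identity when i = K. Then I − J is invertible and S_K → (I − J)⁻¹ c as K → ∞. -/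
open scoped Topology

/-- `ordComp B i m` is the ordered composition `B (i+m-1) ∘ ⋯ ∘ B (i+1) ∘ B i`
of `m` operators (`B i` applied first); it is the identity when `m = 0`.
In particular `ordComp B i (K - i)` is `B_{K-1} ∘ ⋯ ∘ B_i` for `i ≤ K`. -/
noncomputable def ordComp {𝕜 : Type*} [NontriviallyNormedField 𝕜] {F : Type*}
    [NormedAddCommGroup F] [NormedSpace 𝕜 F]
    (B : ℕ → F →L[𝕜] F) (i : ℕ) : ℕ → (F →L[𝕜] F)
  | 0 => ContinuousLinearMap.id 𝕜 F
  | m + 1 => (B (i + m)).comp (ordComp B i m)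

/-- Decaying recursive bound forces convergence to zero. -/
lemma aux_tendsto_zero (a d : ℕ → ℝ) (r : ℝ) (hr0 : 0 ≤ r) (hr1 : r < 1)
    (ha : ∀ k, 0 ≤ a k) (hrec : ∀ k, a (k + 1) ≤ r * a k + d k)
    (hd : Filter.Tendsto d Filter.atTop (𝓝 0)) :
    Filter.Tendsto a Filter.atTop (𝓝 0) := by
  rw [Metric.tendsto_atTop]
  intro ε hε
  have hδ : 0 < ε * (1 - r) / 2 := by
    have : 0 < 1 - r := by linarith
    positivity
  obtain ⟨N, hN⟩ := (Metric.tendsto_atTop.1 hd) (ε * (1 - r) / 2) hδ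
  have key : ∀ m, a (N + m) ≤ r ^ m * a N + ε / 2 := by
    intro m
    induction m with
    | zero => simp; linarith [ha N]
    | succ m ih =>
        have hd' : d (N + m) ≤ ε * (1 - r) / 2 := by
          have := hN (N + m) (Nat.le_add_right _ _)
          rw [Real.dist_eq, sub_zero] at this
          exact le_of_lt (lt_of_abs_lt this)
        have h1 : a (N + (m + 1)) ≤ r * a (N + m) + d (N + m) := by
          have := hrec (N + m)
          simpa [Nat.add_assoc] using this
        have h2 : r * a (N + m) ≤ r * (r ^ m * a N + ε / 2) :=
          mul_le_mul_of_nonneg_left ih hr0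
        calc a (N + (m + 1)) ≤ r * (r ^ m * a N + ε / 2) + ε * (1 - r) / 2 := by linarith
          _ = r ^ (m + 1) * a N + (r * ε / 2 + ε * (1 - r) / 2) := by ring
          _ ≤ r ^ (m + 1) * a N + ε / 2 := by nlinarith
  have hpow : Filter.Tendsto (fun m => r ^ m * a N) Filter.atTop (𝓝 0) := by
    simpa using (tendsto_pow_atTop_nhds_zero_of_lt_one hr0 hr1).mul_const (a N)
  obtain ⟨M, hM⟩ := (Metric.tendsto_atTop.1 hpow) (ε / 2) (by positivity)
  refine ⟨N + M, fun k hk => ?_⟩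
  have hkN : k = N + (k - N) := by omega
  have hM' : r ^ (k - N) * a N < ε / 2 := by
    have := hM (k - N) (by omega)
    rw [Real.dist_eq, sub_zero] at this
    exact lt_of_abs_lt this
  have := key (k - N)
  rw [Real.dist_eq, sub_zero, abs_of_nonneg (ha k)]
  rw [hkN]
  linarith

lemma sum_succ_rec {F : Type*} [NormedAddCommGroup F] [NormedSpace ℝ F]
    (B : ℕ → F →L[ℝ] F) (c : ℕ → F) (K : ℕ) :
    ∑ i ∈ Finset.Icc 1 (K + 1), (ordComp B i (K + 1 - i)) (c (i - 1)) =
    B K (∑ i ∈ Finset.Icc 1 K, (ordComp B i (K - i)) (c (i - 1))) + c K := by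
  rw [Finset.sum_Icc_succ_top (Nat.le_add_left 1 K), map_sum]
  congr 1
  · refine Finset.sum_congr rfl fun i hi => ?_
    obtain ⟨h1, h2⟩ := Finset.mem_Icc.1 hi
    have e1 : K + 1 - i = (K - i) + 1 := by omega
    have e2 : i + (K - i) = K := by omega
    rw [e1]
    show ((B (i + (K - i))).comp (ordComp B i (K - i))) (c (i - 1)) = _
    rw [e2]
    rfl
  · simp [ordComp]

/-- **Convergence of the backpropagated unrolled sums.**
If `B_k → J` in operator norm with `‖J‖ < 1` and `c_k → c` in `ℝ^n`, then for
`S_K = Σ_{i=1}^{K} (B_{K-1} ∘ ⋯ ∘ B_i)(c_{i-1})` (the composition being the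
identity when `i = K`), the map `I - J` is invertible and
`S_K → (I - J)⁻¹ c` as `K → ∞`. -/
theorem unrolled_sum_tendsto_neumann {n : ℕ}
    (B : ℕ → EuclideanSpace ℝ (Fin n) →L[ℝ] EuclideanSpace ℝ (Fin n))
    (J : EuclideanSpace ℝ (Fin n) →L[ℝ] EuclideanSpace ℝ (Fin n))
    (hB : Filter.Tendsto B Filter.atTop (𝓝 J))
    (hJ : ‖J‖ < 1)
    (c : ℕ → EuclideanSpace ℝ (Fin n)) (clim : EuclideanSpace ℝ (Fin n))
    (hc : Filter.Tendsto c Filter.atTop (𝓝 clim)) :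
    IsUnit (ContinuousLinearMap.id ℝ (EuclideanSpace ℝ (Fin n)) - J) ∧
    Filter.Tendsto
      (fun K => ∑ i ∈ Finset.Icc 1 K, (ordComp B i (K - i)) (c (i - 1)))
      Filter.atTop
      (𝓝 ((Ring.inverse (ContinuousLinearMap.id ℝ (EuclideanSpace ℝ (Fin n)) - J)) clim)) := by
  have hid : ContinuousLinearMap.id ℝ (EuclideanSpace ℝ (Fin n)) = (1 : (EuclideanSpace ℝ (Fin n)) →L[ℝ] (EuclideanSpace ℝ (Fin n))) := rfl
  have hU : IsUnit (ContinuousLinearMap.id ℝ (EuclideanSpace ℝ (Fin n)) - J) := by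
    rw [hid]
    exact ⟨Units.oneSub J hJ, (Units.val_oneSub J hJ).symm⟩
  refine ⟨hU, ?_⟩
  set x : (EuclideanSpace ℝ (Fin n)) := (Ring.inverse (ContinuousLinearMap.id ℝ (EuclideanSpace ℝ (Fin n)) - J)) clim with hx
  have hfix : x = J x + clim := by
    have h1 : (ContinuousLinearMap.id ℝ (EuclideanSpace ℝ (Fin n)) - J) * Ring.inverse (ContinuousLinearMap.id ℝ (EuclideanSpace ℝ (Fin n)) - J) = 1 :=
      Ring.mul_inverse_cancel _ hU
    have h2 := congrArg (fun f : (EuclideanSpace ℝ (Fin n)) →L[ℝ] (EuclideanSpace ℝ (Fin n)) => f clim) h1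
    simp only [ContinuousLinearMap.mul_apply, ContinuousLinearMap.one_apply] at h2
    have h3 : x - J x = clim := by
      rw [← h2]
      rfl
    rw [← h3]; abel
  set S : ℕ → (EuclideanSpace ℝ (Fin n)) := fun K => ∑ i ∈ Finset.Icc 1 K, (ordComp B i (K - i)) (c (i - 1)) with hS
  have hSrec : ∀ K, S (K + 1) = B K (S K) + c K := fun K => sum_succ_rec B c K
  -- choose r and N₀
  set r : ℝ := (1 + ‖J‖) / 2 with hr
  have hJr : ‖J‖ < r := by rw [hr]; linarith
  have hr1 : r < 1 := by rw [hr]; linarith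
  have hr0 : 0 ≤ r := by rw [hr]; positivity
  obtain ⟨N₀, hN₀⟩ := (Metric.tendsto_atTop.1 hB) (r - ‖J‖) (by linarith)
  have hBnorm : ∀ k, N₀ ≤ k → ‖B k‖ ≤ r := by
    intro k hk
    have := hN₀ k hk
    rw [dist_eq_norm] at this
    have hx' : B k = (B k - J) + J := by abel
    calc ‖B k‖ = ‖(B k - J) + J‖ := by rw [← hx']
      _ ≤ ‖B k - J‖ + ‖J‖ := norm_add_le _ _
      _ ≤ r := by linarith
  -- error sequence
  set a : ℕ → ℝ := fun k => ‖S (k + N₀) - x‖ with ha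
  set d : ℕ → ℝ := fun k => ‖(B (k + N₀)) x - J x‖ + ‖c (k + N₀) - clim‖ with hd
  have hrec : ∀ k, a (k + 1) ≤ r * a k + d k := by
    intro k
    have key : S (k + N₀ + 1) - x =
        B (k + N₀) (S (k + N₀) - x) + ((B (k + N₀)) x - J x) + (c (k + N₀) - clim) := by
      rw [hSrec (k + N₀), map_sub]
      conv_lhs => rw [hfix]
      abel
    have hdk : d k = ‖(B (k + N₀)) x - J x‖ + ‖c (k + N₀) - clim‖ := rfl
    have hak : a k = ‖S (k + N₀) - x‖ := rfl
    show ‖S (k + 1 + N₀) - x‖ ≤ r * a k + d k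
    rw [show k + 1 + N₀ = k + N₀ + 1 by omega, key]
    calc ‖B (k + N₀) (S (k + N₀) - x) + ((B (k + N₀)) x - J x) + (c (k + N₀) - clim)‖
        ≤ ‖B (k + N₀) (S (k + N₀) - x)‖ + ‖(B (k + N₀)) x - J x‖ + ‖c (k + N₀) - clim‖ :=
          norm_add₃_le
      _ ≤ r * a k + d k := by
          have h1 : ‖B (k + N₀) (S (k + N₀) - x)‖ ≤ ‖B (k + N₀)‖ * ‖S (k + N₀) - x‖ :=
            (B (k + N₀)).le_opNorm _
          have h2 : ‖B (k + N₀)‖ * ‖S (k + N₀) - x‖ ≤ r * ‖S (k + N₀) - x‖ :=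
            mul_le_mul_of_nonneg_right (hBnorm _ (Nat.le_add_left _ _)) (norm_nonneg _)
          rw [hdk, hak]
          linarith
  have hBx : Filter.Tendsto (fun k => (B k) x) Filter.atTop (𝓝 (J x)) :=
    ((ContinuousLinearMap.apply ℝ (EuclideanSpace ℝ (Fin n)) x).continuous.tendsto J).comp hB
  have hd0 : Filter.Tendsto d Filter.atTop (𝓝 0) := by
    have h1 : Filter.Tendsto (fun k => ‖(B k) x - J x‖) Filter.atTop (𝓝 0) :=
      tendsto_iff_norm_sub_tendsto_zero.1 hBx
    have h2 : Filter.Tendsto (fun k => ‖c k - clim‖) Filter.atTop (𝓝 0) :=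
      tendsto_iff_norm_sub_tendsto_zero.1 hc
    have := (h1.comp (Filter.tendsto_add_atTop_nat N₀)).add
      (h2.comp (Filter.tendsto_add_atTop_nat N₀))
    simpa [hd, Function.comp] using this
  have ha0 : Filter.Tendsto a Filter.atTop (𝓝 0) :=
    aux_tendsto_zero a d r hr0 hr1 (fun k => norm_nonneg _) hrec hd0
  have hshift : Filter.Tendsto (fun k => S (k + N₀)) Filter.atTop (𝓝 x) :=
    tendsto_iff_norm_sub_tendsto_zero.2 ha0
  exact (Filter.tendsto_add_atTop_iff_nat N₀).1 hshift
end
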